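/- For every d ≥ 2 and every k ≥ 1, there exists a directed graph D with minimum outdegree d and m = kd(2d−1) + d(2d+1) edges such that for some vertex v₀, every bipartition V = V1 ∪ V2 with v₀ ∈ V1 satisfies e(V1,V2) ≤ (d−1)/(2(2d−1))·m + d²/(2d−1). In particular, the optimal constant c_d in the judicious directed partition problem satisfies c_d ≤ (d−1)/(2(2d−1)). -/

import Mathlib

/-!
The rotational tournament on `2r + 1` vertices is regular, so every cut `A | Aᶜ` is crossed
equally often in both directions, and since it is a tournament the two directions together carry
`|A| (2r + 1 - |A|) ≤ r (r + 1)` edges. In the construction every cut edge from `V₁` to `V₂` lies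
inside one of the tournaments (the extra edges end at `v₀ ∈ V₁`), so
`e(V₁, V₂) ≤ (k (d - 1) d + d (d + 1)) / 2`, which is the claimed bound for
`m = k d (2d - 1) + d (2d + 1)`.
-/

open Finset

/-- The number of directed edges from `X` to `Y`. -/
def eCount {V : Type} [DecidableEq V] (E : V → V → Prop) [DecidableRel E]
    (X Y : Finset V) : ℕ :=
  ((X ×ˢ Y).filter fun p => E p.1 p.2).card

/-- Outdegree of `v`. -/
def outDeg {V : Type} [Fintype V] (E : V → V → Prop) [DecidableRel E] (v : V) : ℕ :=
  (Finset.univ.filter fun w => E v w).card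

lemma mul_two_mul_add_one_sub_le (a r : ℕ) : a * (2 * r + 1 - a) ≤ r * (r + 1) := by
  rcases le_or_gt a (2 * r + 1) with h | h
  · zify [h]
    nlinarith [sq_nonneg ((a : ℤ) - r), sq_nonneg ((a : ℤ) - r - 1)]
  · simp [Nat.sub_eq_zero_of_le h.le]

section eCount

instance {α : Type} (E : α → α → Prop) [DecidableRel E] : DecidableRel (flip E) :=
  fun a b => inferInstanceAs (Decidable (E b a))

variable {α : Type} [DecidableEq α] (E : α → α → Prop) [DecidableRel E]

lemma eCount_eq_sum_sum (X Y : Finset α) :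
    eCount E X Y = ∑ x ∈ X, ∑ y ∈ Y, if E x y then 1 else 0 := by
  rw [eCount, card_filter, sum_product]

lemma eCount_eq_sum_card (X Y : Finset α) : eCount E X Y = ∑ x ∈ X, #(Y.filter (E x)) := by
  simp only [eCount_eq_sum_sum, card_filter]

lemma eCount_flip (X Y : Finset α) : eCount E X Y = eCount (flip E) Y X := by
  rw [eCount_eq_sum_sum, eCount_eq_sum_sum, sum_comm]
  rfl

variable [Fintype α]

lemma eCount_univ_right (X : Finset α) : eCount E X univ = ∑ x ∈ X, outDeg E x :=
  eCount_eq_sum_card E X univ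

lemma eCount_add_eCount_compl_right (X A : Finset α) :
    eCount E X A + eCount E X Aᶜ = eCount E X univ := by
  simp only [eCount_eq_sum_sum, ← sum_add_distrib, sum_add_sum_compl]

lemma eCount_add_eCount_compl_left (A Y : Finset α) :
    eCount E A Y + eCount E Aᶜ Y = eCount E univ Y := by
  simp only [eCount_eq_sum_sum, sum_add_sum_compl]

lemma eCount_compl_eq_of_outDeg_flip (hbal : ∀ v, outDeg (flip E) v = outDeg E v)
    (A : Finset α) : eCount E A Aᶜ = eCount E Aᶜ A := by
  have hdeg : eCount E univ A = eCount E A univ := by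
    rw [eCount_flip, eCount_univ_right, eCount_univ_right]
    exact sum_congr rfl fun v _ => hbal v
  have hout := eCount_add_eCount_compl_right E A A
  have hin := eCount_add_eCount_compl_left E A A
  omega

lemma eCount_compl_add_eCount_compl_of_tournament (htour : ∀ a b, a ≠ b → (E a b ↔ ¬ E b a))
    (A : Finset α) : eCount E A Aᶜ + eCount E Aᶜ A = #A * #Aᶜ := by
  rw [eCount_flip E Aᶜ A, eCount_eq_sum_sum, eCount_eq_sum_sum, ← sum_add_distrib,
    card_eq_sum_ones, sum_mul]
  refine sum_congr rfl fun a ha => ?_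
  rw [← sum_add_distrib, card_eq_sum_ones, one_mul]
  refine sum_congr rfl fun b hb => ?_
  have hab : a ≠ b := by rintro rfl; exact (mem_compl.mp hb) ha
  have := htour a b hab
  by_cases h : E a b <;> simp_all [flip]

lemma two_mul_eCount_compl_le_of_tournament {r : ℕ} (hcard : Fintype.card α = 2 * r + 1)
    (hbal : ∀ v, outDeg (flip E) v = outDeg E v) (htour : ∀ a b, a ≠ b → (E a b ↔ ¬ E b a))
    (A : Finset α) : 2 * eCount E A Aᶜ ≤ r * (r + 1) := by
  have hsym := eCount_compl_eq_of_outDeg_flip E hbal A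
  have hsum := eCount_compl_add_eCount_compl_of_tournament E htour A
  rw [card_compl, hcard] at hsum
  have := mul_two_mul_add_one_sub_le #A r
  omega

end eCount

/-- The Eulerian orientation `a → a + i` (`1 ≤ i ≤ r`) of the complete graph on `2r + 1`
vertices. -/
def rotTournament (r : ℕ) (a b : Fin (2 * r + 1)) : Prop :=
  (b - a).val ∈ Icc 1 r

instance (r : ℕ) : DecidableRel (rotTournament r) :=
  fun a b => inferInstanceAs (Decidable ((b - a).val ∈ Icc 1 r))

lemma card_filter_val_mem_Icc (r : ℕ) :
    #(univ.filter fun u : Fin (2 * r + 1) => u.val ∈ Icc 1 r) = r := by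
  have hlt : ∀ m ∈ Icc 1 r, m < 2 * r + 1 := fun m hm => by simp only [mem_Icc] at hm; omega
  have hfilter :
      univ.filter (fun u : Fin (2 * r + 1) => u.val ∈ Icc 1 r) = (Icc 1 r).attachFin hlt := by
    ext u
    simp
  rw [hfilter, card_attachFin, Nat.card_Icc, Nat.add_sub_cancel]

lemma outDeg_rotTournament (r : ℕ) (v : Fin (2 * r + 1)) : outDeg (rotTournament r) v = r := by
  refine (card_equiv (Equiv.subRight v) ?_).trans (card_filter_val_mem_Icc r)
  simp [rotTournament]

lemma outDeg_flip_rotTournament (r : ℕ) (v : Fin (2 * r + 1)) :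
    outDeg (flip (rotTournament r)) v = r := by
  refine (card_equiv (Equiv.subLeft v) ?_).trans (card_filter_val_mem_Icc r)
  simp [rotTournament, flip]

lemma rotTournament_irrefl (r : ℕ) (a : Fin (2 * r + 1)) : ¬ rotTournament r a a := by
  simp [rotTournament]

lemma rotTournament_iff_not {r : ℕ} {a b : Fin (2 * r + 1)} (hab : a ≠ b) :
    rotTournament r a b ↔ ¬ rotTournament r b a := by
  have hpos : (b - a).val ≠ 0 := by simpa [Fin.ext_iff, sub_eq_zero] using hab.symm
  have hneg : (a - b).val = 2 * r + 1 - (b - a).val := by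
    rw [← neg_sub, Fin.val_neg', Nat.mod_eq_of_lt (by omega)]
  have := (b - a).isLt
  simp only [rotTournament, mem_Icc]
  omega

lemma two_mul_eCount_compl_rotTournament_le (r : ℕ) (A : Finset (Fin (2 * r + 1))) :
    2 * eCount (rotTournament r) A Aᶜ ≤ r * (r + 1) :=
  two_mul_eCount_compl_le_of_tournament _ (Fintype.card_fin _)
    (fun v => by rw [outDeg_rotTournament, outDeg_flip_rotTournament])
    (fun _ _ => rotTournament_iff_not) A

def copiesRel {ι β : Type} (R : β → β → Prop) (p q : ι × β) : Prop := p.1 = q.1 ∧ R p.2 q.2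

instance {ι β : Type} [DecidableEq ι] (R : β → β → Prop) [DecidableRel R] :
    DecidableRel (copiesRel (ι := ι) R) :=
  fun p q => inferInstanceAs (Decidable (p.1 = q.1 ∧ R p.2 q.2))

lemma outDeg_copiesRel {ι β : Type} [Fintype ι] [DecidableEq ι] [Fintype β]
    (R : β → β → Prop) [DecidableRel R] (p : ι × β) : outDeg (copiesRel R) p = outDeg R p.2 := by
  have hnbhd : univ.filter (copiesRel R p) = {p.1} ×ˢ univ.filter (R p.2) := by
    ext ⟨j, b⟩
    simp [copiesRel, eq_comm, and_comm]
  rw [outDeg, outDeg, hnbhd, card_product, card_singleton, one_mul]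

section fiber

variable {ι β : Type} [DecidableEq ι] [Fintype β] [DecidableEq β]

def fiber (X : Finset (ι × β)) (i : ι) : Finset β := univ.filter fun b => (i, b) ∈ X

@[simp]
lemma mem_fiber {X : Finset (ι × β)} {i : ι} {b : β} : b ∈ fiber X i ↔ (i, b) ∈ X := by
  simp [fiber]

variable [Fintype ι]

@[simp]
lemma fiber_compl (X : Finset (ι × β)) (i : ι) : fiber Xᶜ i = (fiber X i)ᶜ := by
  ext
  simp

lemma sum_eq_sum_fiber {M : Type} [AddCommMonoid M] (X : Finset (ι × β)) (f : ι × β → M) :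
    ∑ p ∈ X, f p = ∑ i, ∑ b ∈ fiber X i, f (i, b) :=
  sum_finset_product X univ (fiber X) (by simp)

lemma eCount_copiesRel (R : β → β → Prop) [DecidableRel R] (X Y : Finset (ι × β)) :
    eCount (copiesRel R) X Y = ∑ i, eCount R (fiber X i) (fiber Y i) := by
  simp only [eCount_eq_sum_sum, sum_eq_sum_fiber X, sum_eq_sum_fiber Y]
  refine sum_congr rfl fun i _ => sum_congr rfl fun a _ => ?_
  rw [Fintype.sum_eq_single i fun j hj => sum_eq_zero fun b _ => if_neg fun h => hj h.1.symm]
  simp [copiesRel]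

end fiber

section sumRel

variable {α β : Type} (R : α → α → Prop) (S : β → β → Prop) (C : α → β → Prop)

def sumRel : α ⊕ β → α ⊕ β → Prop
  | .inl a, .inl a' => R a a'
  | .inl a, .inr b => C a b
  | .inr _, .inl _ => False
  | .inr b, .inr b' => S b b'

variable [DecidableRel R] [DecidableRel S] [∀ a b, Decidable (C a b)]

instance : DecidableRel (sumRel R S C)
  | .inl a, .inl a' => inferInstanceAs (Decidable (R a a'))
  | .inl a, .inr b => inferInstanceAs (Decidable (C a b))
  | .inr _, .inl _ => inferInstanceAs (Decidable False)
  | .inr b, .inr b' => inferInstanceAs (Decidable (S b b'))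

lemma eCount_sumRel [DecidableEq α] [DecidableEq β] (X Y : Finset (α ⊕ β)) :
    eCount (sumRel R S C) X Y = eCount R X.toLeft Y.toLeft + eCount S X.toRight Y.toRight
      + ∑ a ∈ X.toLeft, #(Y.toRight.filter (C a)) := by
  simp only [eCount_eq_sum_sum, sum_sum_eq_sum_toLeft_add_sum_toRight X,
    sum_sum_eq_sum_toLeft_add_sum_toRight Y, sumRel, card_filter, sum_add_distrib]
  simp only [↓reduceIte, sum_const_zero, zero_add]
  exact add_right_comm _ _ _

variable [Fintype α] [Fintype β]

lemma outDeg_sumRel_inl (a : α) :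
    outDeg (sumRel R S C) (.inl a) = outDeg R a + #(univ.filter (C a)) := by
  rw [outDeg, outDeg, card_filter, Fintype.sum_sum_type, card_filter, card_filter]
  rfl

lemma outDeg_sumRel_inr (b : β) : outDeg (sumRel R S C) (.inr b) = outDeg S b := by
  rw [outDeg, outDeg, card_filter, Fintype.sum_sum_type, card_filter]
  simp only [sumRel, ↓reduceIte, sum_const_zero, zero_add]
  rfl

end sumRel

abbrev JudiciousVertex (k r : ℕ) : Type := (Fin k × Fin (2 * r + 1)) ⊕ Fin (2 * (r + 1) + 1)

/-- The paper's construction with `d = r + 1`: `k` copies of the orientation of `K_{2d-1}`, one of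
`K_{2d+1}`, and an edge from every vertex of the copies to `v₀ = inr 0`. -/
abbrev judiciousGraph (k r : ℕ) : JudiciousVertex k r → JudiciousVertex k r → Prop :=
  sumRel (copiesRel (rotTournament r)) (rotTournament (r + 1)) fun _ b => b = 0

section judiciousGraph

variable (k r : ℕ)

lemma judiciousGraph_irrefl (v : JudiciousVertex k r) :
    ¬ judiciousGraph k r v v := by
  rcases v with ⟨_, a⟩ | b
  exacts [fun h => rotTournament_irrefl r a h.2, rotTournament_irrefl (r + 1) b]

lemma outDeg_judiciousGraph (v : JudiciousVertex k r) :
    outDeg (judiciousGraph k r) v = r + 1 := by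
  rcases v with p | b
  · rw [outDeg_sumRel_inl, outDeg_copiesRel, outDeg_rotTournament, filter_eq', if_pos (mem_univ _),
      card_singleton]
  · rw [outDeg_sumRel_inr, outDeg_rotTournament]

lemma eCount_judiciousGraph_univ :
    eCount (judiciousGraph k r) univ univ = (k * (2 * r + 1) + (2 * (r + 1) + 1)) * (r + 1) := by
  rw [eCount_univ_right, sum_congr rfl fun v _ => outDeg_judiciousGraph k r v, sum_const, card_univ]
  simp

lemma two_mul_eCount_judiciousGraph_compl_le (V₁ : Finset (JudiciousVertex k r))
    (h₀ : .inr 0 ∈ V₁) :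
    2 * eCount (judiciousGraph k r) V₁ V₁ᶜ ≤ k * (r * (r + 1)) + (r + 1) * (r + 2) := by
  have htoLeft : V₁ᶜ.toLeft = V₁.toLeftᶜ := by ext; simp
  have htoRight : V₁ᶜ.toRight = V₁.toRightᶜ := by ext; simp
  -- the extra edges all end at `v₀ ∈ V₁`
  have hcross : ∑ p ∈ V₁.toLeft, #(V₁ᶜ.toRight.filter fun b => b = 0) = 0 := by
    refine sum_eq_zero fun _ _ => card_eq_zero.mpr (filter_eq_empty_iff.mpr ?_)
    rintro b hb rfl
    simp [h₀] at hb
  rw [eCount_sumRel, hcross, add_zero, eCount_copiesRel, htoLeft, htoRight, mul_add, mul_sum]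
  refine add_le_add ?_ (two_mul_eCount_compl_rotTournament_le (r + 1) _)
  calc ∑ i, 2 * eCount (rotTournament r) (fiber V₁.toLeft i) (fiber V₁.toLeftᶜ i)
      ≤ ∑ _i : Fin k, r * (r + 1) := sum_le_sum fun i _ => by
        rw [fiber_compl]
        exact two_mul_eCount_compl_rotTournament_le r _
    _ = k * (r * (r + 1)) := by simp

end judiciousGraph

theorem stmt10_general (d k : ℕ) (hd : 2 ≤ d) :
    ∃ (V : Type) (iF : Fintype V) (iD : DecidableEq V)
      (E : V → V → Prop) (iR : DecidableRel E),
      (∀ v, ¬ E v v) ∧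
      (∀ v, d ≤ @outDeg V iF E iR v) ∧
      @eCount V iD E iR Finset.univ Finset.univ
        = k * d * (2 * d - 1) + d * (2 * d + 1) ∧
      ∃ v0 : V, ∀ V1 : Finset V, v0 ∈ V1 →
        (@eCount V iD E iR V1 V1ᶜ : ℝ)
          ≤ ((d : ℝ) - 1) / (2 * (2 * (d : ℝ) - 1))
              * (@eCount V iD E iR Finset.univ Finset.univ : ℝ)
            + (d : ℝ) ^ 2 / (2 * (d : ℝ) - 1) := by
  obtain ⟨r, rfl⟩ : ∃ r, d = r + 1 := ⟨d - 1, by omega⟩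
  have hm := eCount_judiciousGraph_univ k r
  refine ⟨_, inferInstance, inferInstance, judiciousGraph k r, inferInstance,
    judiciousGraph_irrefl k r, fun v => (outDeg_judiciousGraph k r v).ge,
    by rw [hm, show 2 * (r + 1) - 1 = 2 * r + 1 by omega]; ring, .inr 0, fun V₁ h₀ => ?_⟩
  have hcut : 2 * (eCount (judiciousGraph k r) V₁ V₁ᶜ : ℝ)
      ≤ k * (r * (r + 1)) + (r + 1) * (r + 2) :=
    mod_cast two_mul_eCount_judiciousGraph_compl_le k r V₁ h₀
  have hrhs : ((↑(r + 1) : ℝ) - 1) / (2 * (2 * ↑(r + 1) - 1))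
        * ↑((k * (2 * r + 1) + (2 * (r + 1) + 1)) * (r + 1))
      + (↑(r + 1) : ℝ) ^ 2 / (2 * ↑(r + 1) - 1)
      = (k * (r * (r + 1)) + (r + 1) * (r + 2)) / 2 := by
    push_cast
    rw [show 2 * ((r : ℝ) + 1) - 1 = 2 * r + 1 by ring]
    field_simp
    ring
  rw [hm, hrhs]
  linarith

/-- For every `d ≥ 2` and `k ≥ 1` there is a directed graph with minimum
outdegree `d` and `m = kd(2d-1) + d(2d+1)` edges containing a vertex `v₀` such
that every bipartition `V = V₁ ∪ V₂` with `v₀ ∈ V₁` satisfies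
`e(V₁,V₂) ≤ (d-1)/(2(2d-1))·m + d²/(2d-1)`.  Hence `c_d ≤ (d-1)/(2(2d-1))`. -/
theorem stmt10 (d k : ℕ) (hd : 2 ≤ d) (hk : 1 ≤ k) :
    ∃ (V : Type) (iF : Fintype V) (iD : DecidableEq V)
      (E : V → V → Prop) (iR : DecidableRel E),
      (∀ v, ¬ E v v) ∧
      (∀ v, d ≤ @outDeg V iF E iR v) ∧
      @eCount V iD E iR Finset.univ Finset.univ
        = k * d * (2 * d - 1) + d * (2 * d + 1) ∧
      ∃ v0 : V, ∀ V1 : Finset V, v0 ∈ V1 →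
        (@eCount V iD E iR V1 V1ᶜ : ℝ)
          ≤ ((d : ℝ) - 1) / (2 * (2 * (d : ℝ) - 1))
              * (@eCount V iD E iR Finset.univ Finset.univ : ℝ)
            + (d : ℝ) ^ 2 / (2 * (d : ℝ) - 1) :=
  stmt10_general d k hd
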